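/- Affine chart of the noncommutative local projective plane (well-definedness of G_{01}): in the localization A := 𝔸^q⟨a_1^{-1}, a_3^{-1}⟩, the elements x := c_1 a_1^{-1}, y := b_1 a_1^{-1} and w := a_1 a_3 a_2 satisfy e_2 x e_2 = x, e_2 y e_2 = y, e_2 w e_2 = w (they are loops at the vertex 2), and they satisfy the noncommutative-ℂ³ relations with parameter q^{-3}: x y = q^{-3} y x, y w = q^{-3} w y, and w x = q^{-3} x w. Consequently the assignment x_1 ↦ c_1 a_1^{-1}, y_1 ↦ b_1 a_1^{-1}, w_1 ↦ a_1 a_3 a_2 defines a unital K-algebra homomorphism G_{01} from K⟨x_1, y_1, w_1⟩/(x_1y_1 − q^{-3}y_1x_1, y_1w_1 − q^{-3}w_1y_1, w_1x_1 − q^{-3}x_1w_1) to the corner algebra e_2 A e_2. -/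

import Mathlib

/-! Statement 12: affine chart of the noncommutative local projective plane. -/

/-- Generators of the quiver algebra `𝔸^q` localized at `a₁, a₃`:
three idempotents `e₁,e₂,e₃`, nine arrows, and the inverses `a₁⁻¹, a₃⁻¹`. -/
inductive QGen : Type
  | e1 | e2 | e3
  | a1 | a2 | a3 | b1 | b2 | b3 | c1 | c2 | c3
  | ia1 | ia3
deriving DecidableEq

open QGen

/-- Defining relations of `𝔸^q⟨a₁⁻¹, a₃⁻¹⟩` inside the free algebra. -/
inductive QRel (K : Type) [CommRing K] (q : Kˣ) :
    FreeAlgebra K QGen → FreeAlgebra K QGen → Prop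
  | sum : QRel K q (FreeAlgebra.ι K e1 + FreeAlgebra.ι K e2 + FreeAlgebra.ι K e3) 1
  | orth (u v : QGen) : u ≠ v → u ∈ [e1, e2, e3] → v ∈ [e1, e2, e3] →
      QRel K q (FreeAlgebra.ι K u * FreeAlgebra.ι K v) 0
  | idem (u : QGen) : u ∈ [e1, e2, e3] →
      QRel K q (FreeAlgebra.ι K u * FreeAlgebra.ι K u) (FreeAlgebra.ι K u)
  -- arrows `a₁,b₁,c₁ : 1 → 2`, `a₂,b₂,c₂ : 2 → 3`, `a₃,b₃,c₃ : 3 → 1`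
  | cor_a1 : QRel K q (FreeAlgebra.ι K a1)
      (FreeAlgebra.ι K e2 * FreeAlgebra.ι K a1 * FreeAlgebra.ι K e1)
  | cor_b1 : QRel K q (FreeAlgebra.ι K b1)
      (FreeAlgebra.ι K e2 * FreeAlgebra.ι K b1 * FreeAlgebra.ι K e1)
  | cor_c1 : QRel K q (FreeAlgebra.ι K c1)
      (FreeAlgebra.ι K e2 * FreeAlgebra.ι K c1 * FreeAlgebra.ι K e1)
  | cor_a2 : QRel K q (FreeAlgebra.ι K a2)
      (FreeAlgebra.ι K e3 * FreeAlgebra.ι K a2 * FreeAlgebra.ι K e2)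
  | cor_b2 : QRel K q (FreeAlgebra.ι K b2)
      (FreeAlgebra.ι K e3 * FreeAlgebra.ι K b2 * FreeAlgebra.ι K e2)
  | cor_c2 : QRel K q (FreeAlgebra.ι K c2)
      (FreeAlgebra.ι K e3 * FreeAlgebra.ι K c2 * FreeAlgebra.ι K e2)
  | cor_a3 : QRel K q (FreeAlgebra.ι K a3)
      (FreeAlgebra.ι K e1 * FreeAlgebra.ι K a3 * FreeAlgebra.ι K e3)
  | cor_b3 : QRel K q (FreeAlgebra.ι K b3)
      (FreeAlgebra.ι K e1 * FreeAlgebra.ι K b3 * FreeAlgebra.ι K e3)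
  | cor_c3 : QRel K q (FreeAlgebra.ι K c3)
      (FreeAlgebra.ι K e1 * FreeAlgebra.ι K c3 * FreeAlgebra.ι K e3)
  -- the nine superpotential relations
  | r1 : QRel K q (FreeAlgebra.ι K a3 * FreeAlgebra.ι K b2)
      ((q : K) • (FreeAlgebra.ι K b3 * FreeAlgebra.ι K a2))
  | r2 : QRel K q (FreeAlgebra.ι K a1 * FreeAlgebra.ι K b3)
      ((q : K) • (FreeAlgebra.ι K b1 * FreeAlgebra.ι K a3))
  | r3 : QRel K q (FreeAlgebra.ι K a2 * FreeAlgebra.ι K b1)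
      ((q : K) • (FreeAlgebra.ι K b2 * FreeAlgebra.ι K a1))
  | r4 : QRel K q (FreeAlgebra.ι K b2 * FreeAlgebra.ι K c1)
      ((q : K) • (FreeAlgebra.ι K c2 * FreeAlgebra.ι K b1))
  | r5 : QRel K q (FreeAlgebra.ι K b3 * FreeAlgebra.ι K c2)
      ((q : K) • (FreeAlgebra.ι K c3 * FreeAlgebra.ι K b2))
  | r6 : QRel K q (FreeAlgebra.ι K b1 * FreeAlgebra.ι K c3)
      ((q : K) • (FreeAlgebra.ι K c1 * FreeAlgebra.ι K b3))
  | r7 : QRel K q (FreeAlgebra.ι K c1 * FreeAlgebra.ι K a3)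
      ((q : K) • (FreeAlgebra.ι K a1 * FreeAlgebra.ι K c3))
  | r8 : QRel K q (FreeAlgebra.ι K c2 * FreeAlgebra.ι K a1)
      ((q : K) • (FreeAlgebra.ι K a2 * FreeAlgebra.ι K c1))
  | r9 : QRel K q (FreeAlgebra.ι K c3 * FreeAlgebra.ι K a2)
      ((q : K) • (FreeAlgebra.ι K a3 * FreeAlgebra.ι K c2))
  -- localization at a₁ (tail 1, head 2) and a₃ (tail 3, head 1)
  | inv_a1_left : QRel K q (FreeAlgebra.ι K ia1 * FreeAlgebra.ι K a1) (FreeAlgebra.ι K e1)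
  | inv_a1_right : QRel K q (FreeAlgebra.ι K a1 * FreeAlgebra.ι K ia1) (FreeAlgebra.ι K e2)
  | inv_a1_cor : QRel K q (FreeAlgebra.ι K ia1)
      (FreeAlgebra.ι K e1 * FreeAlgebra.ι K ia1 * FreeAlgebra.ι K e2)
  | inv_a3_left : QRel K q (FreeAlgebra.ι K ia3 * FreeAlgebra.ι K a3) (FreeAlgebra.ι K e3)
  | inv_a3_right : QRel K q (FreeAlgebra.ι K a3 * FreeAlgebra.ι K ia3) (FreeAlgebra.ι K e1)
  | inv_a3_cor : QRel K q (FreeAlgebra.ι K ia3)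
      (FreeAlgebra.ι K e3 * FreeAlgebra.ι K ia3 * FreeAlgebra.ι K e1)

/-- The localized quiver algebra `𝔸^q⟨a₁⁻¹, a₃⁻¹⟩`. -/
abbrev QAlg (K : Type) [CommRing K] (q : Kˣ) := RingQuot (QRel K q)

/-- The image of a generator in `𝔸^q⟨a₁⁻¹, a₃⁻¹⟩`. -/
def qel (K : Type) [CommRing K] (q : Kˣ) (x : QGen) : QAlg K q :=
  RingQuot.mkAlgHom K (QRel K q) (FreeAlgebra.ι K x)

/-- Generators of the noncommutative `ℂ³` algebra `K⟨x₁,y₁,w₁⟩`. -/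
inductive C3Gen : Type
  | x1 | y1 | w1
deriving DecidableEq

/-- Relations of the noncommutative `ℂ³` with parameter `q⁻³`:
`x₁y₁ = q⁻³ y₁x₁`, `y₁w₁ = q⁻³ w₁y₁`, `w₁x₁ = q⁻³ x₁w₁`. -/
inductive C3Rel (K : Type) [CommRing K] (q : Kˣ) :
    FreeAlgebra K C3Gen → FreeAlgebra K C3Gen → Prop
  | rxy : C3Rel K q (FreeAlgebra.ι K C3Gen.x1 * FreeAlgebra.ι K C3Gen.y1)
      ((((q⁻¹ : Kˣ) : K) ^ 3) • (FreeAlgebra.ι K C3Gen.y1 * FreeAlgebra.ι K C3Gen.x1))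
  | ryw : C3Rel K q (FreeAlgebra.ι K C3Gen.y1 * FreeAlgebra.ι K C3Gen.w1)
      ((((q⁻¹ : Kˣ) : K) ^ 3) • (FreeAlgebra.ι K C3Gen.w1 * FreeAlgebra.ι K C3Gen.y1))
  | rwx : C3Rel K q (FreeAlgebra.ι K C3Gen.w1 * FreeAlgebra.ι K C3Gen.x1)
      ((((q⁻¹ : Kˣ) : K) ^ 3) • (FreeAlgebra.ι K C3Gen.x1 * FreeAlgebra.ι K C3Gen.w1))

/-- The noncommutative `ℂ³` algebra with parameter `q⁻³`. -/
abbrev C3Alg (K : Type) [CommRing K] (q : Kˣ) := RingQuot (C3Rel K q)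

/-! The vertex-2 loops come from the head and tail idempotents of the arrows. For the
commutation relations, each of `x y`, `y w`, `w x` is carried to the reversed product by three
superpotential relations, each contributing a factor `q⁻¹`; the inverses `a₁⁻¹, a₃⁻¹` are moved
across arrows by conjugating a relation, e.g. `a₁⁻¹ b₁ = q⁻¹ b₃ a₃⁻¹` from `a₁ b₃ = q b₁ a₃`.
The homomorphism `G₀₁` is the compression `u ↦ e₂ F(u)` of the unital map `F` sending
`x₁, y₁, w₁` to `x, y, w`; it is multiplicative since `e₂` commutes with `x, y, w`. -/

open QGen

section Semigroup

variable {M : Type*} [Semigroup M] {e f g : M}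

lemma IsIdempotentElem.mul_eq_of_eq_mul_mul_self (he : IsIdempotentElem e) (h : g = f * g * e) :
    g * e = g := by
  rw [h, mul_assoc, he.eq]

lemma IsIdempotentElem.self_mul_eq_of_eq_self_mul_mul (he : IsIdempotentElem e)
    (h : g = e * g * f) : e * g = g := by
  rw [h, ← mul_assoc, ← mul_assoc, he.eq]

lemma IsIdempotentElem.commute_of_mul_mul_eq {x : M} (he : IsIdempotentElem e)
    (h : e * x * e = x) : Commute e x :=
  have hx := (Subsemigroup.mem_corner_iff he).1 ⟨x, h⟩
  hx.1.trans hx.2.symm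

end Semigroup

lemma Units.smul_smul_smul_eq_pow_three {R M : Type*} [Monoid R] [MulAction R M] (u : Rˣ)
    (m : M) : u • u • u • m = (u : R) ^ 3 • m := by
  rw [smul_smul, smul_smul, Units.smul_def, ← pow_three', Units.val_pow_eq_pow_val]

section Corner

variable {R A B : Type*} [CommSemiring R] [Semiring A] [Algebra R A] [Semiring B] [Algebra R B]

lemma FreeAlgebra.commute_lift {X : Type*} {f : X → A} {e : A} (hf : ∀ x, Commute e (f x))
    (z : FreeAlgebra R X) : Commute e (FreeAlgebra.lift R f z) := by
  induction z using FreeAlgebra.induction with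
  | grade0 r => simpa using Algebra.commute_algebraMap_right r e
  | grade1 x => simpa using hf x
  | mul a b ha hb => simpa using ha.mul_right hb
  | add a b ha hb => simpa using ha.add_right hb

def AlgHom.toCorner (F : B →ₐ[R] A) {e : A} (he : IsIdempotentElem e)
    (hF : ∀ b, Commute e (F b)) : B →ₙₐ[R] A where
  toFun b := e * F b
  map_smul' r b := by simp only [map_smul, mul_smul_comm, MonoidHom.id_apply]
  map_zero' := by simp only [map_zero, mul_zero]
  map_add' b c := by simp only [map_add, mul_add]
  map_mul' b c :=
    calc e * F (b * c) = e * (e * F b) * F c := by rw [map_mul, ← mul_assoc e e, he.eq, mul_assoc]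
      _ = e * (F b * e) * F c := by rw [(hF b).eq]
      _ = e * F b * (e * F c) := by simp only [mul_assoc]

variable (F : B →ₐ[R] A) {e : A} (he : IsIdempotentElem e) (hF : ∀ b, Commute e (F b))

lemma AlgHom.toCorner_apply (b : B) : F.toCorner he hF b = e * F b := rfl

lemma AlgHom.toCorner_one : F.toCorner he hF 1 = e := by
  rw [toCorner_apply, map_one, mul_one]

lemma AlgHom.mul_toCorner_mul (b : B) : e * F.toCorner he hF b * e = F.toCorner he hF b := by
  rw [toCorner_apply, ← mul_assoc, he.eq, mul_assoc, ← (hF b).eq, ← mul_assoc, he.eq]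

lemma AlgHom.toCorner_apply_of_mul_mul_eq {b : B} {x : A} (hb : F b = x) (hx : e * x * e = x) :
    F.toCorner he hF b = x := by
  rw [toCorner_apply, hb, ((Subsemigroup.mem_corner_iff he).1 ⟨x, hx⟩).1]

end Corner

namespace C3Alg

variable {K : Type} [CommRing K] {q : Kˣ} {A : Type*} [Semiring A] [Algebra K A]
  {x y w : A} (hxy : x * y = ((q⁻¹ : Kˣ) : K) ^ 3 • (y * x))
  (hyw : y * w = ((q⁻¹ : Kˣ) : K) ^ 3 • (w * y)) (hwx : w * x = ((q⁻¹ : Kˣ) : K) ^ 3 • (x * w))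

def lift : C3Alg K q →ₐ[K] A :=
  RingQuot.liftAlgHom K
    ⟨FreeAlgebra.lift K fun | .x1 => x | .y1 => y | .w1 => w, by rintro _ _ ⟨⟩ <;> simpa⟩

lemma lift_x1 : lift hxy hyw hwx (RingQuot.mkAlgHom K (C3Rel K q) (FreeAlgebra.ι K .x1)) = x := by
  simp [lift]

lemma lift_y1 : lift hxy hyw hwx (RingQuot.mkAlgHom K (C3Rel K q) (FreeAlgebra.ι K .y1)) = y := by
  simp [lift]

lemma lift_w1 : lift hxy hyw hwx (RingQuot.mkAlgHom K (C3Rel K q) (FreeAlgebra.ι K .w1)) = w := by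
  simp [lift]

lemma commute_lift {e : A} (hx : Commute e x) (hy : Commute e y) (hw : Commute e w)
    (u : C3Alg K q) : Commute e (lift hxy hyw hwx u) := by
  obtain ⟨z, rfl⟩ := RingQuot.mkAlgHom_surjective K (C3Rel K q) u
  rw [lift, RingQuot.liftAlgHom_mkAlgHom_apply]
  exact FreeAlgebra.commute_lift (by rintro (_ | _ | _) <;> assumption) z

end C3Alg

namespace QAlg

variable {K : Type} [CommRing K] {q : Kˣ}

local prefix:max "𝔸" => qel K q

lemma qel_mul_qel {u v w : QGen}
    (h : QRel K q (FreeAlgebra.ι K u * FreeAlgebra.ι K v) (FreeAlgebra.ι K w)) :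
    𝔸 u * 𝔸 v = 𝔸 w := by
  simpa only [qel, map_mul] using RingQuot.mkAlgHom_rel K h

lemma qel_eq_head_mul_mul_tail {g h t : QGen}
    (hr : QRel K q (FreeAlgebra.ι K g)
      (FreeAlgebra.ι K h * FreeAlgebra.ι K g * FreeAlgebra.ι K t)) :
    𝔸 g = 𝔸 h * 𝔸 g * 𝔸 t := by
  simpa only [qel, map_mul] using RingQuot.mkAlgHom_rel K hr

lemma qel_mul_qel_eq_inv_smul {u v s t : QGen}
    (hr : QRel K q (FreeAlgebra.ι K u * FreeAlgebra.ι K v)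
      ((q : K) • (FreeAlgebra.ι K s * FreeAlgebra.ι K t))) :
    𝔸 s * 𝔸 t = q⁻¹ • (𝔸 u * 𝔸 v) := by
  rw [eq_inv_smul_iff, Units.smul_def]
  simpa only [qel, map_mul, map_smul] using (RingQuot.mkAlgHom_rel K hr).symm

lemma isIdempotentElem_e1 : IsIdempotentElem (𝔸 e1) := qel_mul_qel (.idem e1 (by simp))
lemma isIdempotentElem_e2 : IsIdempotentElem (𝔸 e2) := qel_mul_qel (.idem e2 (by simp))

lemma e2_mul_a1 : 𝔸 e2 * 𝔸 a1 = 𝔸 a1 :=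
  isIdempotentElem_e2.self_mul_eq_of_eq_self_mul_mul (qel_eq_head_mul_mul_tail .cor_a1)
lemma e2_mul_b1 : 𝔸 e2 * 𝔸 b1 = 𝔸 b1 :=
  isIdempotentElem_e2.self_mul_eq_of_eq_self_mul_mul (qel_eq_head_mul_mul_tail .cor_b1)
lemma e2_mul_c1 : 𝔸 e2 * 𝔸 c1 = 𝔸 c1 :=
  isIdempotentElem_e2.self_mul_eq_of_eq_self_mul_mul (qel_eq_head_mul_mul_tail .cor_c1)
lemma e1_mul_a3 : 𝔸 e1 * 𝔸 a3 = 𝔸 a3 :=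
  isIdempotentElem_e1.self_mul_eq_of_eq_self_mul_mul (qel_eq_head_mul_mul_tail .cor_a3)
lemma e1_mul_b3 : 𝔸 e1 * 𝔸 b3 = 𝔸 b3 :=
  isIdempotentElem_e1.self_mul_eq_of_eq_self_mul_mul (qel_eq_head_mul_mul_tail .cor_b3)
lemma e1_mul_c3 : 𝔸 e1 * 𝔸 c3 = 𝔸 c3 :=
  isIdempotentElem_e1.self_mul_eq_of_eq_self_mul_mul (qel_eq_head_mul_mul_tail .cor_c3)
lemma b1_mul_e1 : 𝔸 b1 * 𝔸 e1 = 𝔸 b1 :=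
  isIdempotentElem_e1.mul_eq_of_eq_mul_mul_self (qel_eq_head_mul_mul_tail .cor_b1)
lemma c1_mul_e1 : 𝔸 c1 * 𝔸 e1 = 𝔸 c1 :=
  isIdempotentElem_e1.mul_eq_of_eq_mul_mul_self (qel_eq_head_mul_mul_tail .cor_c1)
lemma a2_mul_e2 : 𝔸 a2 * 𝔸 e2 = 𝔸 a2 :=
  isIdempotentElem_e2.mul_eq_of_eq_mul_mul_self (qel_eq_head_mul_mul_tail .cor_a2)
lemma b2_mul_e2 : 𝔸 b2 * 𝔸 e2 = 𝔸 b2 :=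
  isIdempotentElem_e2.mul_eq_of_eq_mul_mul_self (qel_eq_head_mul_mul_tail .cor_b2)
lemma c2_mul_e2 : 𝔸 c2 * 𝔸 e2 = 𝔸 c2 :=
  isIdempotentElem_e2.mul_eq_of_eq_mul_mul_self (qel_eq_head_mul_mul_tail .cor_c2)
lemma ia1_mul_e2 : 𝔸 ia1 * 𝔸 e2 = 𝔸 ia1 :=
  isIdempotentElem_e2.mul_eq_of_eq_mul_mul_self (qel_eq_head_mul_mul_tail .inv_a1_cor)

lemma ia1_mul_a1 : 𝔸 ia1 * 𝔸 a1 = 𝔸 e1 := qel_mul_qel .inv_a1_left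
lemma a1_mul_ia1 : 𝔸 a1 * 𝔸 ia1 = 𝔸 e2 := qel_mul_qel .inv_a1_right
lemma a3_mul_ia3 : 𝔸 a3 * 𝔸 ia3 = 𝔸 e1 := qel_mul_qel .inv_a3_right

lemma b3_mul_a2 : 𝔸 b3 * 𝔸 a2 = q⁻¹ • (𝔸 a3 * 𝔸 b2) := qel_mul_qel_eq_inv_smul .r1
lemma b1_mul_a3 : 𝔸 b1 * 𝔸 a3 = q⁻¹ • (𝔸 a1 * 𝔸 b3) := qel_mul_qel_eq_inv_smul .r2
lemma b2_mul_a1 : 𝔸 b2 * 𝔸 a1 = q⁻¹ • (𝔸 a2 * 𝔸 b1) := qel_mul_qel_eq_inv_smul .r3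
lemma c1_mul_b3 : 𝔸 c1 * 𝔸 b3 = q⁻¹ • (𝔸 b1 * 𝔸 c3) := qel_mul_qel_eq_inv_smul .r6
lemma a1_mul_c3 : 𝔸 a1 * 𝔸 c3 = q⁻¹ • (𝔸 c1 * 𝔸 a3) := qel_mul_qel_eq_inv_smul .r7
lemma a2_mul_c1 : 𝔸 a2 * 𝔸 c1 = q⁻¹ • (𝔸 c2 * 𝔸 a1) := qel_mul_qel_eq_inv_smul .r8
lemma a3_mul_c2 : 𝔸 a3 * 𝔸 c2 = q⁻¹ • (𝔸 c3 * 𝔸 a2) := qel_mul_qel_eq_inv_smul .r9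

lemma ia1_mul_b1 : 𝔸 ia1 * 𝔸 b1 = q⁻¹ • (𝔸 b3 * 𝔸 ia3) :=
  calc 𝔸 ia1 * 𝔸 b1 = 𝔸 ia1 * (𝔸 b1 * 𝔸 a3) * 𝔸 ia3 := by
        rw [mul_assoc, mul_assoc, a3_mul_ia3, b1_mul_e1]
    _ = q⁻¹ • (𝔸 ia1 * 𝔸 a1 * 𝔸 b3 * 𝔸 ia3) := by
        rw [b1_mul_a3]; simp only [mul_smul_comm, smul_mul_assoc, mul_assoc]
    _ = q⁻¹ • (𝔸 b3 * 𝔸 ia3) := by rw [ia1_mul_a1, e1_mul_b3]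

lemma c3_mul_ia3 : 𝔸 c3 * 𝔸 ia3 = q⁻¹ • (𝔸 ia1 * 𝔸 c1) :=
  calc 𝔸 c3 * 𝔸 ia3 = 𝔸 ia1 * (𝔸 a1 * 𝔸 c3) * 𝔸 ia3 := by
        rw [← mul_assoc, ia1_mul_a1, e1_mul_c3]
    _ = q⁻¹ • (𝔸 ia1 * 𝔸 c1 * (𝔸 a3 * 𝔸 ia3)) := by
        rw [a1_mul_c3]; simp only [mul_smul_comm, smul_mul_assoc, mul_assoc]
    _ = q⁻¹ • (𝔸 ia1 * 𝔸 c1) := by rw [a3_mul_ia3, mul_assoc, c1_mul_e1]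

lemma b2_eq_inv_smul : 𝔸 b2 = q⁻¹ • (𝔸 a2 * 𝔸 b1 * 𝔸 ia1) :=
  calc 𝔸 b2 = 𝔸 b2 * 𝔸 a1 * 𝔸 ia1 := by rw [mul_assoc, a1_mul_ia1, b2_mul_e2]
    _ = q⁻¹ • (𝔸 a2 * 𝔸 b1 * 𝔸 ia1) := by rw [b2_mul_a1, smul_mul_assoc]

variable (K q) in
def chartX : QAlg K q := 𝔸 c1 * 𝔸 ia1

variable (K q) in
def chartY : QAlg K q := 𝔸 b1 * 𝔸 ia1

variable (K q) in
def chartW : QAlg K q := 𝔸 a1 * 𝔸 a3 * 𝔸 a2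

lemma e2_mul_chartX_mul_e2 : 𝔸 e2 * chartX K q * 𝔸 e2 = chartX K q := by
  rw [chartX, ← mul_assoc, e2_mul_c1, mul_assoc, ia1_mul_e2]

lemma e2_mul_chartY_mul_e2 : 𝔸 e2 * chartY K q * 𝔸 e2 = chartY K q := by
  rw [chartY, ← mul_assoc, e2_mul_b1, mul_assoc, ia1_mul_e2]

lemma e2_mul_chartW_mul_e2 : 𝔸 e2 * chartW K q * 𝔸 e2 = chartW K q := by
  rw [chartW, ← mul_assoc, ← mul_assoc, e2_mul_a1, mul_assoc _ (𝔸 a2), a2_mul_e2]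

lemma ia1_mul_chartW : 𝔸 ia1 * chartW K q = 𝔸 a3 * 𝔸 a2 := by
  rw [chartW, ← mul_assoc, ← mul_assoc, ia1_mul_a1, e1_mul_a3]

lemma chartX_mul_chartY :
    chartX K q * chartY K q = ((q⁻¹ : Kˣ) : K) ^ 3 • (chartY K q * chartX K q) :=
  calc chartX K q * chartY K q = 𝔸 c1 * (𝔸 ia1 * 𝔸 b1) * 𝔸 ia1 := by
        simp only [chartX, chartY, mul_assoc]
    _ = q⁻¹ • (𝔸 c1 * 𝔸 b3 * (𝔸 ia3 * 𝔸 ia1)) := by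
        rw [ia1_mul_b1]; simp only [mul_smul_comm, smul_mul_assoc, mul_assoc]
    _ = q⁻¹ • q⁻¹ • (𝔸 b1 * (𝔸 c3 * 𝔸 ia3) * 𝔸 ia1) := by
        rw [c1_mul_b3]; simp only [smul_mul_assoc, mul_assoc]
    _ = q⁻¹ • q⁻¹ • q⁻¹ • (chartY K q * chartX K q) := by
        rw [c3_mul_ia3]; simp only [chartX, chartY, mul_smul_comm, smul_mul_assoc, mul_assoc]
    _ = _ := Units.smul_smul_smul_eq_pow_three _ _

lemma chartY_mul_chartW :
    chartY K q * chartW K q = ((q⁻¹ : Kˣ) : K) ^ 3 • (chartW K q * chartY K q) :=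
  calc chartY K q * chartW K q = 𝔸 b1 * 𝔸 a3 * 𝔸 a2 := by
        rw [chartY, mul_assoc, ia1_mul_chartW, mul_assoc]
    _ = q⁻¹ • (𝔸 a1 * (𝔸 b3 * 𝔸 a2)) := by
        rw [b1_mul_a3, smul_mul_assoc, mul_assoc]
    _ = q⁻¹ • q⁻¹ • (𝔸 a1 * 𝔸 a3 * 𝔸 b2) := by
        rw [b3_mul_a2]; simp only [mul_smul_comm, mul_assoc]
    _ = q⁻¹ • q⁻¹ • q⁻¹ • (chartW K q * chartY K q) := by
        rw [b2_eq_inv_smul]; simp only [chartW, chartY, mul_smul_comm, mul_assoc]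
    _ = _ := Units.smul_smul_smul_eq_pow_three _ _

lemma chartW_mul_chartX :
    chartW K q * chartX K q = ((q⁻¹ : Kˣ) : K) ^ 3 • (chartX K q * chartW K q) :=
  calc chartW K q * chartX K q = 𝔸 a1 * 𝔸 a3 * (𝔸 a2 * 𝔸 c1) * 𝔸 ia1 := by
        simp only [chartW, chartX, mul_assoc]
    _ = q⁻¹ • (𝔸 a1 * (𝔸 a3 * 𝔸 c2)) := by
        rw [a2_mul_c1]
        simp only [mul_smul_comm, smul_mul_assoc, mul_assoc]
        rw [a1_mul_ia1, c2_mul_e2]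
    _ = q⁻¹ • q⁻¹ • (𝔸 a1 * 𝔸 c3 * 𝔸 a2) := by
        rw [a3_mul_c2]; simp only [mul_smul_comm, mul_assoc]
    _ = q⁻¹ • q⁻¹ • q⁻¹ • (chartX K q * chartW K q) := by
        rw [a1_mul_c3, chartX, mul_assoc (𝔸 c1), ia1_mul_chartW, smul_mul_assoc, mul_assoc]
    _ = _ := Units.smul_smul_smul_eq_pow_three _ _

end QAlg

/-- In `A = 𝔸^q⟨a₁⁻¹, a₃⁻¹⟩`, the elements `x = c₁a₁⁻¹`, `y = b₁a₁⁻¹`,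
`w = a₁a₃a₂` are loops at vertex 2 and satisfy the nc-`ℂ³` relations with parameter `q⁻³`;
consequently `x₁ ↦ c₁a₁⁻¹`, `y₁ ↦ b₁a₁⁻¹`, `w₁ ↦ a₁a₃a₂` defines a unital `K`-algebra
homomorphism `G₀₁` from `K⟨x₁,y₁,w₁⟩/(x₁y₁−q⁻³y₁x₁, y₁w₁−q⁻³w₁y₁, w₁x₁−q⁻³x₁w₁)`
to the corner algebra `e₂ A e₂` (encoded as a non-unital algebra map into `A` sending `1` to
`e₂` and landing in the corner). -/
theorem nc_local_P2_affine_chart (K : Type) [CommRing K] (q : Kˣ) :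
    (qel K q e2 * (qel K q c1 * qel K q ia1) * qel K q e2 = qel K q c1 * qel K q ia1)
    ∧ (qel K q e2 * (qel K q b1 * qel K q ia1) * qel K q e2 = qel K q b1 * qel K q ia1)
    ∧ (qel K q e2 * (qel K q a1 * qel K q a3 * qel K q a2) * qel K q e2
        = qel K q a1 * qel K q a3 * qel K q a2)
    ∧ ((qel K q c1 * qel K q ia1) * (qel K q b1 * qel K q ia1)
        = (((q⁻¹ : Kˣ) : K) ^ 3) • ((qel K q b1 * qel K q ia1) * (qel K q c1 * qel K q ia1)))
    ∧ ((qel K q b1 * qel K q ia1) * (qel K q a1 * qel K q a3 * qel K q a2)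
        = (((q⁻¹ : Kˣ) : K) ^ 3) •
            ((qel K q a1 * qel K q a3 * qel K q a2) * (qel K q b1 * qel K q ia1)))
    ∧ ((qel K q a1 * qel K q a3 * qel K q a2) * (qel K q c1 * qel K q ia1)
        = (((q⁻¹ : Kˣ) : K) ^ 3) •
            ((qel K q c1 * qel K q ia1) * (qel K q a1 * qel K q a3 * qel K q a2)))
    ∧ (∃ G : C3Alg K q →ₙₐ[K] QAlg K q,
        G 1 = qel K q e2
        ∧ (∀ u : C3Alg K q, qel K q e2 * G u * qel K q e2 = G u)
        ∧ G (RingQuot.mkAlgHom K (C3Rel K q) (FreeAlgebra.ι K C3Gen.x1))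
            = qel K q c1 * qel K q ia1
        ∧ G (RingQuot.mkAlgHom K (C3Rel K q) (FreeAlgebra.ι K C3Gen.y1))
            = qel K q b1 * qel K q ia1
        ∧ G (RingQuot.mkAlgHom K (C3Rel K q) (FreeAlgebra.ι K C3Gen.w1))
            = qel K q a1 * qel K q a3 * qel K q a2) := by
  open QAlg in
  have he := isIdempotentElem_e2 (K := K) (q := q)
  let F := C3Alg.lift (A := QAlg K q) chartX_mul_chartY chartY_mul_chartW chartW_mul_chartX
  have hF : ∀ u, Commute (qel K q e2) (F u) :=
    C3Alg.commute_lift _ _ _ (he.commute_of_mul_mul_eq e2_mul_chartX_mul_e2)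
      (he.commute_of_mul_mul_eq e2_mul_chartY_mul_e2)
      (he.commute_of_mul_mul_eq e2_mul_chartW_mul_e2)
  refine ⟨e2_mul_chartX_mul_e2, e2_mul_chartY_mul_e2, e2_mul_chartW_mul_e2, chartX_mul_chartY,
    chartY_mul_chartW, chartW_mul_chartX, F.toCorner he hF, F.toCorner_one he hF,
    F.mul_toCorner_mul he hF, ?_, ?_, ?_⟩
  · exact F.toCorner_apply_of_mul_mul_eq he hF (C3Alg.lift_x1 ..) e2_mul_chartX_mul_e2
  · exact F.toCorner_apply_of_mul_mul_eq he hF (C3Alg.lift_y1 ..) e2_mul_chartY_mul_e2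
  · exact F.toCorner_apply_of_mul_mul_eq he hF (C3Alg.lift_w1 ..) e2_mul_chartW_mul_e2
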